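/- Finite-time second law of thermodynamics: for every t ∈ ℝ, ∫₀^t tr(ω·σ_s) ds ≥ 0 (the signed integral from 0 to t); equivalently, for t ≠ 0, t·tr(ω·Σ^t) ≥ 0. -/

import Mathlib

open Matrix MeasureTheory Filter Topology
open scoped ComplexOrder

/-- Functional calculus for a Hermitian complex matrix: apply `f : ℝ → ℝ` to the eigenvalues
(junk value `0` if the matrix is not Hermitian). -/
noncomputable def matCFC {n : ℕ} (f : ℝ → ℝ) (A : Matrix (Fin n) (Fin n) ℂ) :
    Matrix (Fin n) (Fin n) ℂ :=
  if h : A.IsHermitian then h.cfc f else 0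

/-- Functional-calculus logarithm of a (positive-definite Hermitian) matrix. -/
noncomputable def mlog {n : ℕ} (A : Matrix (Fin n) (Fin n) ℂ) : Matrix (Fin n) (Fin n) ℂ :=
  matCFC Real.log A

/-- Functional-calculus real power of a (positive-definite Hermitian) matrix. -/
noncomputable def mpow {n : ℕ} (A : Matrix (Fin n) (Fin n) ℂ) (q : ℝ) :
    Matrix (Fin n) (Fin n) ℂ :=
  matCFC (fun x => x ^ q) A

/-- Matrix exponential. -/
noncomputable def mexp {n : ℕ} (A : Matrix (Fin n) (Fin n) ℂ) : Matrix (Fin n) (Fin n) ℂ :=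
  NormedSpace.exp A

/-- Heisenberg evolution `τ^t(A) = e^{itH} A e^{-itH}`. -/
noncomputable def heisenberg {n : ℕ} (H : Matrix (Fin n) (Fin n) ℂ) (t : ℝ)
    (A : Matrix (Fin n) (Fin n) ℂ) : Matrix (Fin n) (Fin n) ℂ :=
  mexp ((Complex.I * t) • H) * A * mexp ((-(Complex.I * t)) • H)

/-- Schrödinger evolution of the state, `ω_t = e^{-itH} ω e^{itH}`. -/
noncomputable def stateT {n : ℕ} (H ω : Matrix (Fin n) (Fin n) ℂ) (t : ℝ) :
    Matrix (Fin n) (Fin n) ℂ :=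
  mexp ((-(Complex.I * t)) • H) * ω * mexp ((Complex.I * t) • H)

/-- Entropy production observable `σ = -i (H log ω - log ω H)`. -/
noncomputable def entropyProd {n : ℕ} (H ω : Matrix (Fin n) (Fin n) ℂ) :
    Matrix (Fin n) (Fin n) ℂ :=
  (-Complex.I) • (H * mlog ω - mlog ω * H)

/-- `σ_s = τ^s(σ)`. -/
noncomputable def sigmaAt {n : ℕ} (H ω : Matrix (Fin n) (Fin n) ℂ) (s : ℝ) :
    Matrix (Fin n) (Fin n) ℂ :=
  heisenberg H s (entropyProd H ω)

/-- `∫₀^t σ_s ds` (entrywise integral). -/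
noncomputable def intSigma {n : ℕ} (H ω : Matrix (Fin n) (Fin n) ℂ) (t : ℝ) :
    Matrix (Fin n) (Fin n) ℂ :=
  Matrix.of fun i j => ∫ s in (0:ℝ)..t, sigmaAt H ω s i j

/-- Mean entropy production rate `Σ^t = (1/t) ∫₀^t σ_s ds`. -/
noncomputable def meanSigma {n : ℕ} (H ω : Matrix (Fin n) (Fin n) ℂ) (t : ℝ) :
    Matrix (Fin n) (Fin n) ℂ :=
  ((t : ℂ)⁻¹) • intSigma H ω t

/-- The Evans–Searles functional `ES_t(α) = log tr(ω e^{-α ∫₀^t σ_s ds})`. -/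
noncomputable def ES {n : ℕ} (H ω : Matrix (Fin n) (Fin n) ℂ) (t α : ℝ) : ℝ :=
  Real.log ((Matrix.trace (ω * mexp ((-α) • intSigma H ω t))).re)

/-- The entropic pressure functional `e_{p,t}(α)` for `0 < p < ∞`. -/
noncomputable def ePressure {n : ℕ} (H ω : Matrix (Fin n) (Fin n) ℂ) (p t α : ℝ) : ℝ :=
  Real.log ((Matrix.trace (mpow
    (mpow ω ((1 - α)/p) * mpow (stateT H ω t) (2*α/p) * mpow ω ((1 - α)/p)) (p/2))).re)

/-- The entropic pressure functional `e_{∞,t}(α)`. -/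
noncomputable def ePressureInf {n : ℕ} (H ω : Matrix (Fin n) (Fin n) ℂ) (t α : ℝ) : ℝ :=
  Real.log ((Matrix.trace (mexp ((1 - α) • mlog ω + α • mlog (stateT H ω t)))).re)

/-!
Differentiating `s ↦ tr(ω τ^s(log ω))` gives `-tr(ω σ_s)`, so `∫₀^t tr(ω σ_s) ds =
tr(ω log ω) - tr(ω U log ω U*)` with `U = e^{itH}` unitary. This is a relative entropy, hence
nonnegative (Klein's inequality): writing `ω = V diag(a) V*` and `W = V* U V`, it equals
`∑ᵢⱼ |Wᵢⱼ|² aᵢ (log aᵢ - log aⱼ)`, the weights `|Wᵢⱼ|²` are doubly stochastic, and each term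
dominates `|Wᵢⱼ|² (aᵢ - aⱼ)`, whose sum vanishes.
-/

theorem Real.sub_le_mul_sub_log {x y : ℝ} (hx : 0 < x) (hy : 0 < y) :
    x - y ≤ x * (Real.log x - Real.log y) := by
  have h := mul_le_mul_of_nonneg_left (Real.log_le_sub_one_of_pos (div_pos hy hx)) hx.le
  rw [Real.log_div hy.ne' hx.ne', mul_sub_one, mul_div_cancel₀ _ hx.ne'] at h
  linarith

namespace Matrix

variable {ι 𝕜 : Type*} [Fintype ι] [DecidableEq ι] [RCLike 𝕜]

theorem sum_mul_mul_log_le_of_mem_doublyStochastic {P : Matrix ι ι ℝ}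
    (hP : P ∈ doublyStochastic ℝ ι) {a : ι → ℝ} (ha : ∀ i, 0 < a i) :
    ∑ i, ∑ j, P i j * (a i * Real.log (a j)) ≤ ∑ i, a i * Real.log (a i) := by
  obtain ⟨hP0, hrow, hcol⟩ := mem_doublyStochastic_iff_sum.mp hP
  have hrow' (c : ι → ℝ) : ∑ i, ∑ j, P i j * c i = ∑ i, c i := by
    simp only [← Finset.sum_mul, hrow, one_mul]
  have hcol' (c : ι → ℝ) : ∑ i, ∑ j, P i j * c j = ∑ j, c j := by
    rw [Finset.sum_comm]
    simp only [← Finset.sum_mul, hcol, one_mul]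
  calc ∑ i, ∑ j, P i j * (a i * Real.log (a j))
      ≤ ∑ i, ∑ j, P i j * (a i * Real.log (a i) - (a i - a j)) := by
        gcongr with i _ j _
        · exact hP0 i j
        · linarith [Real.sub_le_mul_sub_log (ha i) (ha j)]
    _ = ∑ i, a i * Real.log (a i) := by
        simp only [mul_sub, Finset.sum_sub_distrib, hrow', hcol', sub_self, sub_zero]

theorem of_norm_sq_mem_doublyStochastic {U : Matrix ι ι 𝕜} (hU : U ∈ unitaryGroup ι 𝕜) :
    of (fun i j => ‖U i j‖ ^ 2) ∈ doublyStochastic ℝ ι := by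
  have hdiag (V : Matrix ι ι 𝕜) (i : ι) : (V * Vᴴ) i i = ((∑ j, ‖V i j‖ ^ 2 : ℝ) : 𝕜) := by
    simp only [mul_apply, conjTranspose_apply, ← starRingEnd_apply, RCLike.mul_conj]
    push_cast; rfl
  refine mem_doublyStochastic_iff_sum.mpr ⟨fun i j => sq_nonneg _, fun i => ?_, fun j => ?_⟩
  · have h := hdiag U i
    rw [← star_eq_conjTranspose, Unitary.mul_star_self_of_mem hU, one_apply_eq] at h
    exact_mod_cast h.symm
  · have h := hdiag Uᴴ j
    rw [conjTranspose_conjTranspose, ← star_eq_conjTranspose,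
      Unitary.star_mul_self_of_mem hU, one_apply_eq] at h
    simp only [star_apply, norm_star] at h
    exact_mod_cast h.symm

theorem re_trace_diagonal_mul_mul_diagonal_mul_conjTranspose (d e : ι → ℝ) (W : Matrix ι ι 𝕜) :
    RCLike.re (trace (diagonal (RCLike.ofReal ∘ d) * W * diagonal (RCLike.ofReal ∘ e) * Wᴴ)) =
      ∑ i, ∑ j, ‖W i j‖ ^ 2 * (d i * e j) := by
  simp only [trace, diag_apply, mul_apply (N := Wᴴ), mul_diagonal, diagonal_mul,
    conjTranspose_apply, Function.comp_apply, map_sum]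
  refine Finset.sum_congr rfl fun i _ => Finset.sum_congr rfl fun j _ => ?_
  rw [mul_right_comm _ _ (star _), mul_assoc _ (W i j), ← starRingEnd_apply, RCLike.mul_conj,
    ← RCLike.ofReal_pow, ← RCLike.ofReal_mul, ← RCLike.ofReal_mul, RCLike.ofReal_re]
  ring

theorem re_trace_mul_unitary_conj_cfc_log_le {A : Matrix ι ι 𝕜} (hA : A.PosDef)
    {U : Matrix ι ι 𝕜} (hU : U ∈ unitaryGroup ι 𝕜) :
    RCLike.re (trace (A * (U * cfc Real.log A * star U))) ≤
      RCLike.re (trace (A * cfc Real.log A)) := by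
  set V : Matrix ι ι 𝕜 := (hA.1.eigenvectorUnitary : Matrix ι ι 𝕜)
  set a := hA.1.eigenvalues
  have hA_eq : A = V * diagonal (RCLike.ofReal ∘ a) * star V := hA.1.spectral_theorem
  have hlog : cfc Real.log A = V * diagonal (RCLike.ofReal ∘ Real.log ∘ a) * star V :=
    hA.1.cfc_eq _
  have hV : V ∈ unitaryGroup ι 𝕜 := hA.1.eigenvectorUnitary.2
  set W : Matrix ι ι 𝕜 := star V * U * V
  have hW : W ∈ unitaryGroup ι 𝕜 := mul_mem (mul_mem (Unitary.star_mem hV) hU) hV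
  have star_mul_cancel_left (X : Matrix ι ι 𝕜) : star V * (V * X) = X := by
    rw [← mul_assoc, Unitary.star_mul_self_of_mem hV, one_mul]
  have htrace_conj (X : Matrix ι ι 𝕜) : trace (V * X * star V) = trace X := by
    rw [trace_mul_cycle, Unitary.star_mul_self_of_mem hV, one_mul]
  have hlhs : trace (A * (U * cfc Real.log A * star U)) =
      trace (diagonal (RCLike.ofReal ∘ a) * W * diagonal (RCLike.ofReal ∘ Real.log ∘ a) * Wᴴ) := by
    rw [← htrace_conj (_ * W * _ * Wᴴ), hlog, hA_eq]
    simp only [W, ← star_eq_conjTranspose, star_mul, star_star, mul_assoc,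
      Unitary.mul_star_self_of_mem hV, mul_one]
  have hrhs : trace (A * cfc Real.log A) = ∑ i, (a i * Real.log (a i) : 𝕜) := by
    calc trace (A * cfc Real.log A)
        = trace (V * (diagonal (RCLike.ofReal ∘ a) *
            diagonal (RCLike.ofReal ∘ Real.log ∘ a)) * star V) := by
          rw [hlog, hA_eq]
          simp only [mul_assoc, star_mul_cancel_left]
      _ = ∑ i, (a i * Real.log (a i) : 𝕜) := by
          rw [htrace_conj, diagonal_mul_diagonal, trace_diagonal]
          rfl
  rw [hlhs, hrhs, re_trace_diagonal_mul_mul_diagonal_mul_conjTranspose, map_sum]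
  simp only [← RCLike.ofReal_mul, RCLike.ofReal_re]
  exact sum_mul_mul_log_le_of_mem_doublyStochastic (of_norm_sq_mem_doublyStochastic hW)
    hA.eigenvalues_pos

end Matrix

section Dynamics

open scoped Matrix.Norms.L2Operator

namespace Matrix

variable {m ι : Type*} [Fintype m] [Fintype ι] [DecidableEq ι]

theorem intervalIntegral_apply {f : ℝ → Matrix m ι ℂ} {a b : ℝ}
    (hf : IntervalIntegrable f volume a b) (i : m) (j : ι) :
    (∫ s in a..b, f s) i j = ∫ s in a..b, f s i j :=
  ((entryLinearMap ℂ ℂ i j).toContinuousLinearMap.intervalIntegral_comp_comm hf).symm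

noncomputable def reTraceMul (ρ : Matrix ι ι ℂ) : Matrix ι ι ℂ →L[ℝ] ℝ :=
  LinearMap.toContinuousLinearMap
    (Complex.reLm ∘ₗ ((traceLinearMap ι ℂ ℂ ∘ₗ LinearMap.mulLeft ℂ ρ).restrictScalars ℝ))

theorem reTraceMul_apply (ρ X : Matrix ι ι ℂ) : reTraceMul ρ X = (trace (ρ * X)).re := rfl

end Matrix

variable {n : ℕ} (H : Matrix (Fin n) (Fin n) ℂ)

theorem heisenberg_eq_exp (t : ℝ) (A : Matrix (Fin n) (Fin n) ℂ) :
    heisenberg H t A =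
      NormedSpace.exp (t • (Complex.I • H)) * A * NormedSpace.exp (t • -(Complex.I • H)) := by
  have h : (Complex.I * t) • H = t • (Complex.I • H) := by
    rw [← smul_assoc, Complex.real_smul, mul_comm]
  rw [heisenberg, mexp, mexp, neg_smul, h, smul_neg]

theorem hasDerivAt_heisenberg (t : ℝ) (A : Matrix (Fin n) (Fin n) ℂ) :
    HasDerivAt (fun s => heisenberg H s A) (heisenberg H t (Complex.I • (H * A - A * H))) t := by
  simp only [heisenberg_eq_exp]
  refine (((hasDerivAt_exp_smul_const (Complex.I • H) t).mul_const A).mul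
    (hasDerivAt_exp_smul_const' (-(Complex.I • H)) t)).congr_deriv ?_
  simp only [smul_mul_assoc, mul_smul_comm, mul_sub, sub_mul, smul_sub, mul_neg, neg_mul,
    mul_assoc]
  abel

theorem heisenberg_zero (A : Matrix (Fin n) (Fin n) ℂ) : heisenberg H 0 A = A := by
  simp [heisenberg_eq_exp]

theorem continuous_heisenberg (A : Matrix (Fin n) (Fin n) ℂ) :
    Continuous fun s => heisenberg H s A :=
  continuous_iff_continuousAt.2 fun t => (hasDerivAt_heisenberg H t A).continuousAt

theorem heisenberg_eq_unitary_conj (hH : H.IsHermitian) (t : ℝ) :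
    ∃ U ∈ unitaryGroup (Fin n) ℂ, ∀ A, heisenberg H t A = U * A * star U := by
  have hstar : star (NormedSpace.exp (t • (Complex.I • H))) =
      NormedSpace.exp (t • -(Complex.I • H)) := by
    rw [NormedSpace.star_exp, star_smul, star_smul, hH.isSelfAdjoint.star_eq, Complex.star_def,
      Complex.conj_I, star_trivial, neg_smul, smul_neg]
  refine ⟨_, mem_unitaryGroup_iff.mpr ?_, fun A => by rw [heisenberg_eq_exp, hstar]⟩
  rw [hstar, smul_neg,
    ← Matrix.exp_add_of_commute _ _ (Commute.refl (t • (Complex.I • H))).neg_right,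
    add_neg_cancel, NormedSpace.exp_zero]

variable (ω : Matrix (Fin n) (Fin n) ℂ)

theorem sigmaAt_eq_neg_heisenberg (s : ℝ) :
    sigmaAt H ω s = -heisenberg H s (Complex.I • (H * mlog ω - mlog ω * H)) := by
  simp only [sigmaAt, entropyProd, heisenberg, neg_smul, mul_neg, neg_mul]

theorem integral_re_trace_mul_sigmaAt (t : ℝ) :
    ∫ s in (0:ℝ)..t, (trace (ω * sigmaAt H ω s)).re =
      (trace (ω * mlog ω)).re - (trace (ω * heisenberg H t (mlog ω))).re := by
  have hderiv (s : ℝ) : HasDerivAt (fun u => -reTraceMul ω (heisenberg H u (mlog ω)))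
      (reTraceMul ω (sigmaAt H ω s)) s := by
    have h := (reTraceMul ω).hasFDerivAt.comp_hasDerivAt s (hasDerivAt_heisenberg H s (mlog ω))
    rw [sigmaAt_eq_neg_heisenberg, map_neg]
    exact h.neg
  have hcont : Continuous fun s => reTraceMul ω (sigmaAt H ω s) :=
    (reTraceMul ω).continuous.comp (continuous_heisenberg H _)
  simp only [← reTraceMul_apply]
  rw [intervalIntegral.integral_eq_sub_of_hasDerivAt (fun s _ => hderiv s)
    (hcont.intervalIntegrable 0 t), heisenberg_zero]
  ring

theorem re_trace_mul_intSigma (t : ℝ) :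
    (trace (ω * intSigma H ω t)).re = ∫ s in (0:ℝ)..t, (trace (ω * sigmaAt H ω s)).re := by
  have hint : IntervalIntegrable (sigmaAt H ω) volume 0 t :=
    (continuous_heisenberg H _).intervalIntegrable 0 t
  have hintSigma : intSigma H ω t = ∫ s in (0:ℝ)..t, sigmaAt H ω s := by
    ext i j
    exact (Matrix.intervalIntegral_apply hint i j).symm
  rw [hintSigma, ← reTraceMul_apply, ← (reTraceMul ω).intervalIntegral_comp_comm hint]
  rfl

theorem mlog_eq_cfc {A : Matrix (Fin n) (Fin n) ℂ} (hA : A.IsHermitian) :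
    mlog A = cfc Real.log A := by
  rw [mlog, matCFC, dif_pos hA, hA.cfc_eq]

theorem re_trace_mul_heisenberg_mlog_le (hH : H.IsHermitian) (hω : ω.PosDef) (t : ℝ) :
    (trace (ω * heisenberg H t (mlog ω))).re ≤ (trace (ω * mlog ω)).re := by
  obtain ⟨U, hU, hconj⟩ := heisenberg_eq_unitary_conj H hH t
  rw [hconj, mlog_eq_cfc hω.1]
  exact re_trace_mul_unitary_conj_cfc_log_le hω hU

end Dynamics

theorem stmt4_general {n : ℕ} (H ω : Matrix (Fin n) (Fin n) ℂ)
    (hH : H.IsHermitian) (hω : ω.PosDef) :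
    (∀ t : ℝ, 0 ≤ ∫ s in (0:ℝ)..t, (Matrix.trace (ω * sigmaAt H ω s)).re) ∧
    (∀ t : ℝ, t ≠ 0 → 0 ≤ t * (Matrix.trace (ω * meanSigma H ω t)).re) := by
  have hintegral (t : ℝ) : 0 ≤ ∫ s in (0:ℝ)..t, (trace (ω * sigmaAt H ω s)).re := by
    rw [integral_re_trace_mul_sigmaAt]
    exact sub_nonneg.mpr (re_trace_mul_heisenberg_mlog_le H ω hH hω t)
  refine ⟨hintegral, fun t ht => ?_⟩
  rw [meanSigma, mul_smul_comm, trace_smul, smul_eq_mul, ← Complex.ofReal_inv,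
    Complex.re_ofReal_mul, mul_inv_cancel_left₀ ht, re_trace_mul_intSigma]
  exact hintegral t

/-- finite-time second law: `∫₀^t tr(ω σ_s) ds ≥ 0` for all `t`; equivalently
`t · tr(ω Σ^t) ≥ 0` for `t ≠ 0`. -/
theorem stmt4 {n : ℕ} (H ω : Matrix (Fin n) (Fin n) ℂ)
    (hH : H.IsHermitian) (hω : ω.PosDef) (htr : ω.trace = 1) :
    (∀ t : ℝ, 0 ≤ ∫ s in (0:ℝ)..t, (Matrix.trace (ω * sigmaAt H ω s)).re) ∧
    (∀ t : ℝ, t ≠ 0 → 0 ≤ t * (Matrix.trace (ω * meanSigma H ω t)).re) :=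
  stmt4_general H ω hH hω
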